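/- The log-Hadamard representation := H^{⊗(2k+1)}·cexp(h(A))·H^{⊗(2k+1)} (with cexp(h(A)) = I_{N²} ⊕ exp(h(A)), N = 2^k) defines an injective group homomorphism from the additive group of N×N symmetric ℤ₂-matrices to the unitary group U(2N²): (Â·B̂ = widehat(A +₂ B) = B̂·Â, widehat(0) = I, and A ≠ B implies ≠ B̂). -/

import Mathlib

open Matrix Kronecker

/-- Vertices of a graph with N = 2^k nodes, encoded as bitstrings of k qubits. -/
abbrev Vtx (k : ℕ) := Fin k → Fin 2

/-- The 2×2 Hadamard matrix. -/
noncomputable def H2 : Matrix (Fin 2) (Fin 2) ℂ :=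
  ((Real.sqrt 2 : ℂ))⁻¹ • !![1, 1; 1, -1]

/-- h(A) = iπ·∑_{i,j} A_{ij} |i,j⟩⟨i,j|. -/
noncomputable def hmat {k : ℕ} (A : Matrix (Vtx k) (Vtx k) (ZMod 2)) :
    Matrix (Vtx k × Vtx k) (Vtx k × Vtx k) ℂ :=
  Matrix.diagonal fun p => Complex.I * (Real.pi : ℂ) * ((A p.1 p.2).val : ℂ)

/-- cexp(K) = I ⊕ exp(K) = |0⟩⟨0|⊗I + |1⟩⟨1|⊗exp(K). -/
noncomputable def cexpM {k : ℕ} (K : Matrix (Vtx k × Vtx k) (Vtx k × Vtx k) ℂ) :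
    Matrix (Fin 2 × (Vtx k × Vtx k)) (Fin 2 × (Vtx k × Vtx k)) ℂ :=
  (Matrix.single 0 0 1) ⊗ₖ (1 : Matrix (Vtx k × Vtx k) (Vtx k × Vtx k) ℂ)
    + (Matrix.single 1 1 1) ⊗ₖ NormedSpace.exp K

/-- The Hadamard transform H^{⊗(2k+1)} on the (2k+1)-qubit space
ℂ² ⊗ (ℂ^{2^k} ⊗ ℂ^{2^k}), given by its entrywise tensor-power formula. -/
noncomputable def Hfull (k : ℕ) :
    Matrix (Fin 2 × (Vtx k × Vtx k)) (Fin 2 × (Vtx k × Vtx k)) ℂ :=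
  Matrix.of fun p q =>
    H2 p.1 q.1 * (∏ t, H2 (p.2.1 t) (q.2.1 t)) * ∏ t, H2 (p.2.2 t) (q.2.2 t)

/-- The log-Hadamard representation Â = H^{⊗(2k+1)}·cexp(h(A))·H^{⊗(2k+1)}. -/
noncomputable def hatRep {k : ℕ} (A : Matrix (Vtx k) (Vtx k) (ZMod 2)) :
    Matrix (Fin 2 × (Vtx k × Vtx k)) (Fin 2 × (Vtx k × Vtx k)) ℂ :=
  Hfull k * cexpM (hmat A) * Hfull k

/-! The Hadamard transform `Hfull k` is a tensor power of the involution `H2`, hence an involution,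
so conjugation by it is an injective multiplicative map; so is the embedding `X ↦ I ⊕ X`.
Finally `exp (h(A))` is the diagonal matrix of signs `(-1)^{A_ij}`, and `a ↦ (-1)^a` is an injective
homomorphism from `ℤ₂` to `ℂˣ`: this is where the addition mod 2 is matched. -/

theorem conj_mul_conj_of_mul_self_eq_one {M : Type*} [Monoid M] {P : M} (hP : P * P = 1)
    (X Y : M) : P * X * P * (P * Y * P) = P * (X * Y) * P := by
  simp only [mul_assoc]
  rw [← mul_assoc P P, hP, one_mul]

theorem conj_injective_of_mul_self_eq_one {M : Type*} [Monoid M] {P : M} (hP : P * P = 1) :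
    Function.Injective fun X => P * X * P := by
  intro X Y h
  have hconj : ∀ Z : M, P * (P * Z * P) * P = Z := fun Z => by
    simp only [← mul_assoc, hP, one_mul]
    rw [mul_assoc, hP, mul_one]
  rw [← hconj X, ← hconj Y]
  exact congrArg (fun Z => P * Z * P) h

theorem neg_one_pow_val_add {R : Type*} [Ring R] (a b : ZMod 2) :
    (-1 : R) ^ (a + b).val = (-1 : R) ^ a.val * (-1 : R) ^ b.val := by
  rw [← pow_add, ZMod.val_add, ← neg_one_pow_eq_pow_mod_two]

theorem neg_one_pow_val_injective {R : Type*} [Ring R] [Nontrivial R] (hR : ringChar R ≠ 2) :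
    Function.Injective fun a : ZMod 2 => (-1 : R) ^ a.val := by
  have h := Ring.neg_one_ne_one_of_char_ne_two hR
  intro a b hab
  fin_cases a <;> fin_cases b
  · rfl
  · exact absurd hab (by simpa [ZMod.val] using h.symm)
  · exact absurd hab (by simpa [ZMod.val] using h)
  · rfl

namespace Matrix

section PiKronecker

variable {ι α R : Type*} [Fintype ι] [CommSemiring R]

def piKronecker (M : Matrix α α R) : Matrix (ι → α) (ι → α) R :=
  of fun u v => ∏ t, M (u t) (v t)

theorem piKronecker_mul [DecidableEq ι] [Fintype α] (M N : Matrix α α R) :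
    (piKronecker M * piKronecker N : Matrix (ι → α) (ι → α) R) = piKronecker (M * N) := by
  ext u w
  simp only [piKronecker, mul_apply, of_apply, Fintype.prod_sum, ← Finset.prod_mul_distrib]

theorem piKronecker_one [DecidableEq α] :
    (piKronecker 1 : Matrix (ι → α) (ι → α) R) = 1 := by
  ext u v
  simp only [piKronecker, of_apply, one_apply, Finset.prod_boole, Finset.mem_univ, true_implies,
    funext_iff]

end PiKronecker

section Controlled

variable {n R : Type*} [DecidableEq n] [CommSemiring R]

def controlled (X : Matrix n n R) : Matrix (Fin 2 × n) (Fin 2 × n) R :=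
  single 0 0 1 ⊗ₖ 1 + single 1 1 1 ⊗ₖ X

theorem controlled_mul [Fintype n] (X Y : Matrix n n R) :
    controlled X * controlled Y = controlled (X * Y) := by
  simp only [controlled, add_mul, mul_add, ← mul_kronecker_mul, single_mul_single_same,
    single_mul_single_of_ne _ _ _ _ (by decide : (0 : Fin 2) ≠ 1),
    single_mul_single_of_ne _ _ _ _ (by decide : (1 : Fin 2) ≠ 0), zero_kronecker, add_zero,
    zero_add, mul_one, one_mul]

theorem controlled_one : (controlled 1 : Matrix (Fin 2 × n) (Fin 2 × n) R) = 1 := by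
  rw [controlled, ← add_kronecker, ← one_kronecker_one]
  congr
  ext i j
  fin_cases i <;> fin_cases j <;> simp

theorem controlled_injective : Function.Injective (controlled : Matrix n n R → _) := by
  intro X Y h
  ext i j
  simpa [controlled] using congrFun (congrFun h (1, i)) (1, j)

end Controlled

end Matrix

open NormedSpace

theorem H2_mul_self : H2 * H2 = 1 := by
  have h : ((Real.sqrt 2 : ℂ))⁻¹ * ((Real.sqrt 2 : ℂ))⁻¹ = 2⁻¹ := by
    rw [← mul_inv, ← Complex.ofReal_mul, Real.mul_self_sqrt zero_le_two]
    norm_num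
  rw [H2, smul_mul_smul_comm, h]
  ext i j
  fin_cases i <;> fin_cases j <;> norm_num [mul_apply, Fin.sum_univ_two]

theorem Hfull_eq_kronecker (k : ℕ) : Hfull k = H2 ⊗ₖ (piKronecker H2 ⊗ₖ piKronecker H2) := by
  ext ⟨a, u⟩ ⟨b, v⟩
  simp [Hfull, piKronecker, kroneckerMap_apply, mul_assoc]

theorem Hfull_mul_self (k : ℕ) : Hfull k * Hfull k = 1 := by
  rw [Hfull_eq_kronecker, ← mul_kronecker_mul, ← mul_kronecker_mul, H2_mul_self, piKronecker_mul,
    H2_mul_self, piKronecker_one, one_kronecker_one, one_kronecker_one]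

section Hmat

variable {k : ℕ}

theorem exp_hmat (A : Matrix (Vtx k) (Vtx k) (ZMod 2)) :
    exp (hmat A) = diagonal fun p => (-1 : ℂ) ^ (A p.1 p.2).val := by
  rw [hmat, exp_diagonal]
  congr 1
  funext p
  rw [Pi.exp_def, ← Complex.exp_eq_exp_ℂ]
  dsimp only
  rw [mul_comm, mul_comm Complex.I, Complex.exp_nat_mul, Complex.exp_pi_mul_I]

theorem exp_hmat_add (A B : Matrix (Vtx k) (Vtx k) (ZMod 2)) :
    exp (hmat (A + B)) = exp (hmat A) * exp (hmat B) := by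
  simp only [exp_hmat, diagonal_mul_diagonal, Matrix.add_apply, neg_one_pow_val_add]

theorem exp_hmat_zero : exp (hmat (0 : Matrix (Vtx k) (Vtx k) (ZMod 2))) = 1 := by
  simp [exp_hmat]

theorem exp_hmat_injective : Function.Injective fun A : Matrix (Vtx k) (Vtx k) (ZMod 2) =>
    exp (hmat A) := by
  intro A B h
  ext i j
  have hij := congrFun (congrFun h (i, j)) (i, j)
  simp only [exp_hmat, diagonal_apply_eq] at hij
  exact neg_one_pow_val_injective (by simp) hij

theorem hatRep_eq (A : Matrix (Vtx k) (Vtx k) (ZMod 2)) :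
    hatRep A = Hfull k * controlled (exp (hmat A)) * Hfull k :=
  rfl

theorem hatRep_add (A B : Matrix (Vtx k) (Vtx k) (ZMod 2)) :
    hatRep (A + B) = hatRep A * hatRep B := by
  rw [hatRep_eq, hatRep_eq, hatRep_eq, exp_hmat_add, ← controlled_mul,
    conj_mul_conj_of_mul_self_eq_one (Hfull_mul_self k)]

theorem hatRep_zero : hatRep (0 : Matrix (Vtx k) (Vtx k) (ZMod 2)) = 1 := by
  rw [hatRep_eq, exp_hmat_zero, controlled_one, mul_one, Hfull_mul_self]

theorem hatRep_injective : Function.Injective (hatRep : Matrix (Vtx k) (Vtx k) (ZMod 2) → _) :=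
  (conj_injective_of_mul_self_eq_one (Hfull_mul_self k)).comp
    (controlled_injective.comp exp_hmat_injective)

end Hmat

/-- The log-Hadamard representation is an injective group homomorphism from the
additive group of N×N symmetric ℤ₂-matrices (N = 2^k) to the unitary group:
widehat(A +₂ B) = Â·B̂ = B̂·Â, widehat(0) = I, and A ≠ B implies Â ≠ B̂. -/
theorem stmt_8 {k : ℕ} :
    (∀ A B : Matrix (Vtx k) (Vtx k) (ZMod 2), A.IsSymm → B.IsSymm →
      hatRep (A + B) = hatRep A * hatRep B ∧
      hatRep A * hatRep B = hatRep B * hatRep A) ∧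
    hatRep (0 : Matrix (Vtx k) (Vtx k) (ZMod 2)) = 1 ∧
    (∀ A B : Matrix (Vtx k) (Vtx k) (ZMod 2), A.IsSymm → B.IsSymm →
      A ≠ B → hatRep A ≠ hatRep B) := by
  refine ⟨fun A B _ _ => ⟨hatRep_add A B, ?_⟩, hatRep_zero,
    fun A B _ _ hAB => hatRep_injective.ne hAB⟩
  rw [← hatRep_add, ← hatRep_add, add_comm]
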